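/- In the SR instance I constructed from a cubic graph G as in the rank-maximality NP-hardness reduction, every stable matching M satisfies: {a_j, b_j} ∈ M for 1 ≤ j ≤ 4, and for every i, either both {v_i, w_i} and {x_i, y_i} are in M, or both {v_i, y_i} and {w_i, x_i} are in M; no pair {v_i, v_j} belongs to M. -/
import Mathlib


/-- Agents of the SR instance constructed from a graph with vertex set `V`:
`a_1..a_4`, `b_1..b_4`, and `v_i, w_i, x_i, y_i` for each vertex `i`. -/
inductive Agent (V : Type) where
  | a (j : Fin 4)
  | b (j : Fin 4)
  | v (i : V)
  | w (i : V)
  | x (i : V)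
  | y (i : V)
deriving DecidableEq

noncomputable instance {V : Type} [Fintype V] : Fintype (Agent V) := by
  classical
  exact Fintype.ofInjective
    (fun z : Agent V => match z with
      | .a j => (Sum.inl (Sum.inl j) : (Fin 4 ⊕ Fin 4) ⊕ (V ⊕ V) ⊕ (V ⊕ V))
      | .b j => Sum.inl (Sum.inr j)
      | .v i => Sum.inr (Sum.inl (Sum.inl i))
      | .w i => Sum.inr (Sum.inl (Sum.inr i))
      | .x i => Sum.inr (Sum.inr (Sum.inl i))
      | .y i => Sum.inr (Sum.inr (Sum.inr i)))
    (by intro z z' h; cases z <;> cases z' <;> simp_all)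

/-- `rank` is a valid SR preference profile: each agent strictly ranks all other
agents with ranks `1, ..., #agents − 1`. -/
def ValidRank {V : Type} [Fintype V] [DecidableEq V] (rank : Agent V → Agent V → ℕ) : Prop :=
  ∀ z : Agent V,
    (∀ c c' : Agent V, c ≠ z → c' ≠ z → rank z c = rank z c' → c = c') ∧
    (∀ c : Agent V, c ≠ z → 1 ≤ rank z c ∧ rank z c ≤ Fintype.card (Agent V) - 1)

/-- The preference-list prefixes prescribed by the reduction (the `...` parts of the
lists are arbitrary). -/
def ReductionPrefs {V : Type} [Fintype V] [DecidableEq V] (G : SimpleGraph V)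
    (rank : Agent V → Agent V → ℕ) : Prop :=
  (∀ j : Fin 4, rank (.a j) (.b j) = 1 ∧ rank (.b j) (.a j) = 1) ∧
  (∀ i : V,
    rank (.v i) (.w i) = 1 ∧
    (∀ u : V, G.Adj i u → rank (.v i) (.v u) ∈ ({2, 3, 4} : Set ℕ)) ∧
    rank (.v i) (.y i) = 5 ∧
    rank (.w i) (.x i) = 1 ∧ rank (.w i) (.a 0) = 2 ∧ rank (.w i) (.a 1) = 3 ∧
    rank (.w i) (.a 2) = 4 ∧ rank (.w i) (.a 3) = 5 ∧ rank (.w i) (.v i) = 6 ∧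
    rank (.x i) (.a 0) = 1 ∧ rank (.x i) (.y i) = 2 ∧ rank (.x i) (.w i) = 3 ∧
    rank (.y i) (.v i) = 1 ∧ rank (.y i) (.x i) = 2)

/-- `M` is a (perfect) matching of the agents: a fixed-point-free involution. -/
def IsMatching {V : Type} (M : Agent V → Agent V) : Prop :=
  (∀ z : Agent V, M (M z) = z) ∧ (∀ z : Agent V, M z ≠ z)

/-- `M` is stable: no two agents strictly prefer each other to their partners. -/
def IsStable {V : Type} (rank : Agent V → Agent V → ℕ) (M : Agent V → Agent V) : Prop :=
  ¬ ∃ z c : Agent V, z ≠ c ∧ rank z c < rank z (M z) ∧ rank c z < rank c (M c)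

lemma rank_ne_aux {V : Type} [Fintype V] [DecidableEq V]
    (rank : Agent V → Agent V → ℕ) (hvalid : ValidRank rank)
    {z c d : Agent V} (hc : c ≠ z) (hd : d ≠ z) (hcd : c ≠ d) :
    rank z c ≠ rank z d := fun h => hcd ((hvalid z).1 c d hc hd h)

lemma rank_pos_aux {V : Type} [Fintype V] [DecidableEq V]
    (rank : Agent V → Agent V → ℕ) (hvalid : ValidRank rank)
    {z c : Agent V} (hc : c ≠ z) : 1 ≤ rank z c := ((hvalid z).2 c hc).1

/-- In the SR instance constructed from a cubic graph, every stable matching pairs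
`a_j` with `b_j` for each `j`, pairs each quadruple either as `{v_i,w_i},{x_i,y_i}` or
as `{v_i,y_i},{w_i,x_i}`, and never pairs two vertex-agents `v_i, v_j`. -/
theorem stmt_17 {V : Type} [Fintype V] [DecidableEq V] (G : SimpleGraph V)
    [DecidableRel G.Adj] (hcubic : ∀ i : V, G.degree i = 3)
    (rank : Agent V → Agent V → ℕ) (hvalid : ValidRank rank)
    (hprefs : ReductionPrefs G rank)
    (M : Agent V → Agent V) (hM : IsMatching M) (hstable : IsStable rank M) :
    (∀ j : Fin 4, M (.a j) = .b j) ∧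
    (∀ i : V, (M (.v i) = .w i ∧ M (.x i) = .y i) ∨
              (M (.v i) = .y i ∧ M (.w i) = .x i)) ∧
    (∀ i i' : V, M (.v i) ≠ .v i') := by
  obtain ⟨hinv, hnf⟩ := hM
  have hne := fun {z c d : Agent V} => rank_ne_aux rank hvalid (z := z) (c := c) (d := d)
  have hpos := fun {z c : Agent V} => rank_pos_aux rank hvalid (z := z) (c := c)
  -- Step 1: a_j is matched to b_j
  have ha : ∀ j : Fin 4, M (.a j) = .b j := by
    intro j
    by_contra hcon
    have hab : rank (.a j) (.b j : Agent V) = 1 := (hprefs.1 j).1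
    have hba : rank (.b j) (.a j : Agent V) = 1 := (hprefs.1 j).2
    have h1 : 1 ≤ rank (.a j) (M (.a j)) := hpos (hnf _)
    have h2 : rank (.a j) (.b j : Agent V) ≠ rank (.a j) (M (.a j)) :=
      hne (by simp) (hnf _) (fun h => hcon h.symm)
    have hMb : M (.b j) ≠ (.a j : Agent V) := by
      intro h
      apply hcon
      rw [← h, hinv]
    have h3 : 1 ≤ rank (.b j) (M (.b j)) := hpos (hnf _)
    have h4 : rank (.b j) (.a j : Agent V) ≠ rank (.b j) (M (.b j)) :=
      hne (by simp) (hnf _) (fun h => hMb h.symm)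
    exact hstable ⟨.a j, .b j, by simp, by omega, by omega⟩
  -- Step 2: the quadruple structure
  have hquad : ∀ i : V, (M (.v i) = .w i ∧ M (.x i) = .y i) ∨
      (M (.v i) = .y i ∧ M (.w i) = .x i) := by
    intro i
    obtain ⟨hvw, hvadj, hvy, hwx, hwa0, hwa1, hwa2, hwa3, hwv, hxa0, hxy, hxw, hyv, hyx⟩ :=
      hprefs.2 i
    have hMxa : ∀ j : Fin 4, M (.x i) ≠ (.a j : Agent V) := by
      intro j h
      have := ha j
      rw [← h, hinv] at this
      exact absurd this (by simp)
    have hMwa : ∀ j : Fin 4, M (.w i) ≠ (.a j : Agent V) := by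
      intro j h
      have := ha j
      rw [← h, hinv] at this
      exact absurd this (by simp)
    have hxpos : 1 ≤ rank (.x i) (M (.x i)) := hpos (hnf _)
    have hwpos : 1 ≤ rank (.w i) (M (.w i)) := hpos (hnf _)
    have hypos : 1 ≤ rank (.y i) (M (.y i)) := hpos (hnf _)
    have hvpos : 1 ≤ rank (.v i) (M (.v i)) := hpos (hnf _)
    have hx1 : rank (.x i) (.a 0 : Agent V) ≠ rank (.x i) (M (.x i)) :=
      hne (by simp) (hnf _) (fun h => hMxa 0 h.symm)
    -- Bullet 1: M w = x ∨ M x = y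
    have hb1 : M (.w i) = (.x i : Agent V) ∨ M (.x i) = (.y i : Agent V) := by
      by_contra hc
      push_neg at hc
      obtain ⟨hc1, hc2⟩ := hc
      have hMxw : M (.x i) ≠ (.w i : Agent V) := by
        intro h; apply hc1; rw [← h, hinv]
      have e1 : rank (.w i) (.x i : Agent V) ≠ rank (.w i) (M (.w i)) :=
        hne (by simp) (hnf _) (fun h => hc1 h.symm)
      have e2 : rank (.x i) (.y i : Agent V) ≠ rank (.x i) (M (.x i)) :=
        hne (by simp) (hnf _) (fun h => hc2 h.symm)
      have e3 : rank (.x i) (.w i : Agent V) ≠ rank (.x i) (M (.x i)) :=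
        hne (by simp) (hnf _) (fun h => hMxw h.symm)
      exact hstable ⟨.w i, .x i, by simp, by omega, by omega⟩
    -- Bullet 2: M x = y ∨ M y = v
    have hb2 : M (.x i) = (.y i : Agent V) ∨ M (.y i) = (.v i : Agent V) := by
      by_contra hc
      push_neg at hc
      obtain ⟨hc1, hc2⟩ := hc
      have hMyx : M (.y i) ≠ (.x i : Agent V) := by
        intro h; apply hc1; rw [← h, hinv]
      have e1 : rank (.x i) (.y i : Agent V) ≠ rank (.x i) (M (.x i)) :=
        hne (by simp) (hnf _) (fun h => hc1 h.symm)
      have e2 : rank (.y i) (.v i : Agent V) ≠ rank (.y i) (M (.y i)) :=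
        hne (by simp) (hnf _) (fun h => hc2 h.symm)
      have e3 : rank (.y i) (.x i : Agent V) ≠ rank (.y i) (M (.y i)) :=
        hne (by simp) (hnf _) (fun h => hMyx h.symm)
      exact hstable ⟨.x i, .y i, by simp, by omega, by omega⟩
    by_cases hxy' : M (.x i) = (.y i : Agent V)
    · -- Case B: M x = y, show M v = w
      left
      refine ⟨?_, hxy'⟩
      by_contra hvw'
      have hMvw : M (.v i) ≠ (.w i : Agent V) := hvw'
      have hMwv : M (.w i) ≠ (.v i : Agent V) := by
        intro h; apply hvw'; rw [← h, hinv]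
      have hMwx : M (.w i) ≠ (.x i : Agent V) := by
        intro h
        have : M (.x i) = (.w i : Agent V) := by rw [← h, hinv]
        rw [hxy'] at this
        exact absurd this (by simp)
      have e1 : rank (.v i) (.w i : Agent V) ≠ rank (.v i) (M (.v i)) :=
        hne (by simp) (hnf _) (fun h => hMvw h.symm)
      have f1 : rank (.w i) (.x i : Agent V) ≠ rank (.w i) (M (.w i)) :=
        hne (by simp) (hnf _) (fun h => hMwx h.symm)
      have f2 : rank (.w i) (.a 0 : Agent V) ≠ rank (.w i) (M (.w i)) :=
        hne (by simp) (hnf _) (fun h => hMwa 0 h.symm)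
      have f3 : rank (.w i) (.a 1 : Agent V) ≠ rank (.w i) (M (.w i)) :=
        hne (by simp) (hnf _) (fun h => hMwa 1 h.symm)
      have f4 : rank (.w i) (.a 2 : Agent V) ≠ rank (.w i) (M (.w i)) :=
        hne (by simp) (hnf _) (fun h => hMwa 2 h.symm)
      have f5 : rank (.w i) (.a 3 : Agent V) ≠ rank (.w i) (M (.w i)) :=
        hne (by simp) (hnf _) (fun h => hMwa 3 h.symm)
      have f6 : rank (.w i) (.v i : Agent V) ≠ rank (.w i) (M (.w i)) :=
        hne (by simp) (hnf _) (fun h => hMwv h.symm)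
      exact hstable ⟨.v i, .w i, by simp, by omega, by omega⟩
    · -- Case A: M x ≠ y, so M y = v and M w = x
      right
      have hyv' : M (.y i) = (.v i : Agent V) := hb2.resolve_left hxy'
      have hvy' : M (.v i) = (.y i : Agent V) := by rw [← hyv', hinv]
      exact ⟨hvy', hb1.resolve_right hxy'⟩
  refine ⟨ha, hquad, ?_⟩
  intro i i' h
  rcases hquad i with ⟨h1, _⟩ | ⟨h1, _⟩ <;> rw [h1] at h <;> exact absurd h (by simp)
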